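/- Black-box group privacy for privacy profiles: if δ_M(ε) = sup_{x ≃ x'} D_{e^ε}(M(x)‖M(x')) and δ_{M,k}(ε) = sup_{d(x,x') ≤ k} D_{e^ε}(M(x)‖M(x')) where d is the path metric induced by ≃, then δ_{M,k}(ε) ≤ ((e^ε − 1)/(e^{ε/k} − 1)) · δ_M(ε/k) for all ε > 0 and k ≥ 1. -/
import Mathlib


open MeasureTheory Real

/-- Hockey-stick divergence `D_α(μ‖μ') = sup_E (μ(E) - α μ'(E))`. -/
noncomputable def hsDiv {Z : Type*} [MeasurableSpace Z] (α : ℝ) (μ μ' : Measure Z) : ℝ :=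
  sSup {d : ℝ | ∃ E : Set Z, MeasurableSet E ∧ d = (μ E).toReal - α * (μ' E).toReal}

/-- `pathLE r k x x'` says the path distance induced by the relation `r`
between `x` and `x'` is at most `k`. -/
def pathLE {X : Type*} (r : X → X → Prop) (k : ℕ) (x x' : X) : Prop :=
  ∃ f : ℕ → X, f 0 = x ∧ f k = x' ∧ ∀ i < k, f i = f (i + 1) ∨ r (f i) (f (i + 1))

lemma hsDiv_zero_mem {Z : Type*} [MeasurableSpace Z] (α : ℝ) (μ μ' : Measure Z) :
    (0 : ℝ) ∈ {d : ℝ | ∃ E : Set Z, MeasurableSet E ∧ d = (μ E).toReal - α * (μ' E).toReal} :=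
  ⟨∅, MeasurableSet.empty, by simp⟩

lemma hsDiv_le_of_forall {Z : Type*} [MeasurableSpace Z] {α a : ℝ} {μ μ' : Measure Z}
    (h : ∀ E : Set Z, MeasurableSet E → (μ E).toReal - α * (μ' E).toReal ≤ a) :
    hsDiv α μ μ' ≤ a :=
  csSup_le ⟨0, hsDiv_zero_mem α μ μ'⟩ (by rintro d ⟨E, hE, rfl⟩; exact h E hE)

lemma hsDiv_elt_le_one {Z : Type*} [MeasurableSpace Z] {α : ℝ} (hα : 0 ≤ α)
    (μ μ' : Measure Z) [IsProbabilityMeasure μ] (E : Set Z) :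
    (μ E).toReal - α * (μ' E).toReal ≤ 1 := by
  have h1 : (μ E).toReal ≤ 1 := by
    have h := prob_le_one (μ := μ) (s := E)
    have := ENNReal.toReal_mono (by simp) h
    simpa using this
  nlinarith [mul_nonneg hα (ENNReal.toReal_nonneg (a := μ' E))]

lemma hsDiv_bddAbove {Z : Type*} [MeasurableSpace Z] {α : ℝ} (hα : 0 ≤ α)
    (μ μ' : Measure Z) [IsProbabilityMeasure μ] :
    BddAbove {d : ℝ | ∃ E : Set Z, MeasurableSet E ∧ d = (μ E).toReal - α * (μ' E).toReal} := by
  refine ⟨1, ?_⟩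
  rintro d ⟨E, hE, rfl⟩
  exact hsDiv_elt_le_one hα μ μ' E

lemma le_hsDiv {Z : Type*} [MeasurableSpace Z] {α : ℝ} (hα : 0 ≤ α)
    (μ μ' : Measure Z) [IsProbabilityMeasure μ] {E : Set Z} (hE : MeasurableSet E) :
    (μ E).toReal - α * (μ' E).toReal ≤ hsDiv α μ μ' :=
  le_csSup (hsDiv_bddAbove hα μ μ') ⟨E, hE, rfl⟩

lemma hsDiv_nonneg {Z : Type*} [MeasurableSpace Z] {α : ℝ} (hα : 0 ≤ α)
    (μ μ' : Measure Z) [IsProbabilityMeasure μ] :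
    0 ≤ hsDiv α μ μ' :=
  le_csSup (hsDiv_bddAbove hα μ μ') (hsDiv_zero_mem α μ μ')

lemma hsDiv_le_one {Z : Type*} [MeasurableSpace Z] {α : ℝ} (hα : 0 ≤ α)
    (μ μ' : Measure Z) [IsProbabilityMeasure μ] :
    hsDiv α μ μ' ≤ 1 :=
  hsDiv_le_of_forall (fun E _ => hsDiv_elt_le_one hα μ μ' E)

/-- Black-box group privacy for privacy profiles:
`δ_{M,k}(ε) ≤ ((e^ε - 1)/(e^{ε/k} - 1)) · δ_M(ε/k)`. -/
theorem group_privacy_profile_bound {X Z : Type*} [MeasurableSpace Z]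
    (r : X → X → Prop) (hsym : Symmetric r)
    (M : X → Measure Z) (hM : ∀ x, IsProbabilityMeasure (M x))
    (ε : ℝ) (hε : 0 < ε) (k : ℕ) (hk : 1 ≤ k) :
    sSup {d : ℝ | ∃ x x', pathLE r k x x' ∧ d = hsDiv (exp ε) (M x) (M x')}
      ≤ ((exp ε - 1) / (exp (ε / k) - 1)) *
        sSup {d : ℝ | ∃ x x', r x x' ∧ d = hsDiv (exp (ε / k)) (M x) (M x')} := by
  have := hM
  set q : ℝ := exp (ε / k) with hqdef
  have hk0 : (0 : ℝ) < k := by exact_mod_cast hk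
  have hεk : 0 < ε / k := div_pos hε hk0
  have hq0 : 0 < q := exp_pos _
  have hq1 : 1 < q := by
    rw [hqdef, show (1 : ℝ) = exp 0 by simp]
    exact Real.exp_lt_exp.2 hεk
  have he1 : 1 < exp ε := by
    rw [show (1 : ℝ) = exp 0 by simp]
    exact Real.exp_lt_exp.2 hε
  set S₁ : Set ℝ := {d : ℝ | ∃ x x', r x x' ∧ d = hsDiv q (M x) (M x')} with hS₁
  set δ₁ : ℝ := sSup S₁ with hδ₁
  have hbddS₁ : BddAbove S₁ := by
    refine ⟨1, ?_⟩
    rintro d ⟨x, x', _, rfl⟩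
    exact hsDiv_le_one hq0.le (M x) (M x')
  have hδ₁0 : 0 ≤ δ₁ := by
    rcases S₁.eq_empty_or_nonempty with h | ⟨d, x, x', hr, hd⟩
    · rw [hδ₁, h, Real.sSup_empty]
    · have h1 : 0 ≤ d := hd ▸ hsDiv_nonneg hq0.le (M x) (M x')
      exact h1.trans (le_csSup hbddS₁ ⟨x, x', hr, hd⟩)
  have hstep : ∀ x x', r x x' → ∀ E : Set Z, MeasurableSet E →
      (M x E).toReal ≤ q * (M x' E).toReal + δ₁ := by
    intro x x' hr E hE
    have h1 := le_hsDiv hq0.le (M x) (M x') hE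
    have h2 : hsDiv q (M x) (M x') ≤ δ₁ := le_csSup hbddS₁ ⟨x, x', hr, rfl⟩
    linarith
  have hchain : ∀ E : Set Z, MeasurableSet E → ∀ f : ℕ → X,
      (∀ i < k, f i = f (i + 1) ∨ r (f i) (f (i + 1))) → ∀ j, j ≤ k →
      (M (f 0) E).toReal ≤ q ^ j * (M (f j) E).toReal +
        (∑ i ∈ Finset.range j, q ^ i) * δ₁ := by
    intro E hE f hf j
    induction j with
    | zero => intro _; simp
    | succ j ih =>
      intro hj
      have IH := ih (Nat.le_of_succ_le hj)
      have hstepj : (M (f j) E).toReal ≤ q * (M (f (j + 1)) E).toReal + δ₁ := by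
        rcases hf j (Nat.lt_of_succ_le hj) with heq | hr
        · rw [heq]
          nlinarith [ENNReal.toReal_nonneg (a := M (f (j + 1)) E)]
        · exact hstep _ _ hr E hE
      have hqj : (0 : ℝ) < q ^ j := pow_pos hq0 j
      rw [Finset.sum_range_succ]
      have e1 : q ^ j * (M (f j) E).toReal ≤
          q ^ (j + 1) * (M (f (j + 1)) E).toReal + q ^ j * δ₁ := by
        rw [pow_succ]
        nlinarith
      nlinarith [IH, e1]
  have hqk : q ^ k = exp ε := by
    rw [hqdef, ← Real.exp_nat_mul]
    congr 1
    field_simp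
  have hgeom : ∑ i ∈ Finset.range k, q ^ i = (exp ε - 1) / (q - 1) := by
    rw [geom_sum_eq hq1.ne' k, hqk]
  have hC0 : 0 ≤ (exp ε - 1) / (q - 1) :=
    div_nonneg (by linarith) (by linarith)
  apply Real.sSup_le
  · rintro d ⟨x, x', ⟨f, hf0, hfk, hf⟩, rfl⟩
    apply hsDiv_le_of_forall
    intro E hE
    have h := hchain E hE f hf k le_rfl
    rw [hf0, hfk, hqk, hgeom] at h
    linarith
  · exact mul_nonneg hC0 hδ₁0
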